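/- arXiv:1507.05535 — 3 statements merged into one kernel-verified Lean document; each statement's English description precedes it below -/
import Mathlib

section
/- Let Z and N be independent real random variables on a probability space, where Z is Gaussian with mean 0 and variance σ_z² > 0 and N is integrable with E[N] = 0. Let a ∈ ℝ and set W = a·Z + N. Let f : ℝ → ℝ be differentiable such that f(Z), Z·f(Z), and f'(Z) are integrable and f(x)·exp(−x²/(2σ_z²)) → 0 as x → ±∞. Then E[f(Z)·W] = E[f'(Z)] · E[Z·W]. -/
/-!
Stein's lemma carries the argument: the centered Gaussian density `p` satisfies
`p' x = -(x / σ²) p x`, so integrating `f p'` by parts (the boundary terms vanish by the decay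
hypothesis) gives `E[Z f(Z)] = σ² E[f'(Z)]`. Expanding `W = a Z + N`, independence and `E[N] = 0`
kill the `N`-terms on both sides, leaving `a E[Z f(Z)]` on the left and `a E[Z²] = a σ²` inside
the right.
-/

open MeasureTheory ProbabilityTheory Filter Real
open scoped NNReal Topology

namespace ProbabilityTheory

lemma hasDerivAt_gaussianPDFReal (μ : ℝ) (v : ℝ≥0) (x : ℝ) :
    HasDerivAt (gaussianPDFReal μ v) (-((x - μ) / v) * gaussianPDFReal μ v x) x := by
  have hexponent : HasDerivAt (fun y => -(y - μ) ^ 2 / (2 * v)) (-((x - μ) / v)) x :=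
    ((((hasDerivAt_id x).sub_const μ).pow 2).neg.div_const (2 * (v : ℝ))).congr_deriv
      (by simp only [id]; ring)
  exact (hexponent.exp.const_mul _).congr_deriv (by rw [gaussianPDFReal]; ring)

lemma integrable_gaussianReal_iff {μ : ℝ} {v : ℝ≥0} (hv : v ≠ 0) {g : ℝ → ℝ} :
    Integrable g (gaussianReal μ v) ↔ Integrable (fun x => gaussianPDFReal μ v x * g x) := by
  rw [gaussianReal_of_var_ne_zero _ hv, gaussianPDF_def,
    integrable_withDensity_iff_integrable_smul' (measurable_gaussianPDFReal μ v).ennreal_ofReal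
      (ae_of_all _ fun _ => ENNReal.ofReal_lt_top)]
  simp_rw [ENNReal.toReal_ofReal (gaussianPDFReal_nonneg μ v _), smul_eq_mul]

lemma integral_sub_mul_eq_mul_integral_deriv_gaussianReal {μ : ℝ} {v : ℝ≥0} {f : ℝ → ℝ}
    (hf : Differentiable ℝ f)
    (hxf : Integrable (fun x => (x - μ) * f x) (gaussianReal μ v))
    (hf' : Integrable (deriv f) (gaussianReal μ v))
    (htop : Tendsto (fun x => f x * gaussianPDFReal μ v x) atTop (𝓝 0))
    (hbot : Tendsto (fun x => f x * gaussianPDFReal μ v x) atBot (𝓝 0)) :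
    ∫ x, (x - μ) * f x ∂gaussianReal μ v = v * ∫ x, deriv f x ∂gaussianReal μ v := by
  rcases eq_or_ne v 0 with rfl | hv
  · simp [gaussianReal_zero_var]
  rw [integrable_gaussianReal_iff hv] at hxf hf'
  simp only [integral_gaussianReal_eq_integral_smul hv, smul_eq_mul]
  have hweight : (fun x => f x * (-((x - μ) / v) * gaussianPDFReal μ v x)) =
      fun x => -(v : ℝ)⁻¹ * (gaussianPDFReal μ v x * ((x - μ) * f x)) := by
    ext x
    ring
  have hparts := integral_mul_deriv_eq_deriv_mul (fun x _ => (hf x).hasDerivAt)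
    (fun x _ => hasDerivAt_gaussianPDFReal μ v x)
    (by rw [Pi.mul_def, hweight]; exact hxf.const_mul _)
    (by simpa only [Pi.mul_def, mul_comm] using hf') hbot htop
  rw [hweight, integral_const_mul] at hparts
  simp only [mul_comm (deriv f _)] at hparts
  rwa [sub_self, zero_sub, neg_mul, neg_inj,
    inv_mul_eq_iff_eq_mul₀ (NNReal.coe_ne_zero.mpr hv)] at hparts

section RandomVariables

variable {Ω : Type*} {mΩ : MeasurableSpace Ω} {P : Measure Ω}

lemma HasLaw.integrable_comp_iff {𝓧 E : Type*} {m𝓧 : MeasurableSpace 𝓧}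
    [NormedAddCommGroup E] {μ : Measure 𝓧} {X : Ω → 𝓧} (hX : HasLaw X μ P) {g : 𝓧 → E}
    (hg : AEStronglyMeasurable g μ) :
    Integrable (g ∘ X) P ↔ Integrable g μ := by
  rw [← hX.map_eq] at hg ⊢
  exact (integrable_map_measure hg hX.aemeasurable).symm

lemma HasLaw.integral_sub_mul_eq_mul_integral_deriv_of_gaussianReal {Z : Ω → ℝ} {μ : ℝ}
    {v : ℝ≥0} (hZ : HasLaw Z (gaussianReal μ v) P) {f : ℝ → ℝ} (hf : Differentiable ℝ f)
    (hZf : Integrable (fun ω => (Z ω - μ) * f (Z ω)) P)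
    (hf' : Integrable (fun ω => deriv f (Z ω)) P)
    (htop : Tendsto (fun x => f x * gaussianPDFReal μ v x) atTop (𝓝 0))
    (hbot : Tendsto (fun x => f x * gaussianPDFReal μ v x) atBot (𝓝 0)) :
    ∫ ω, (Z ω - μ) * f (Z ω) ∂P = v * ∫ ω, deriv f (Z ω) ∂P := by
  have hm : AEStronglyMeasurable (fun x => (x - μ) * f x) (gaussianReal μ v) :=
    ((measurable_id.sub_const μ).mul hf.continuous.measurable).aestronglyMeasurable
  have hm' : AEStronglyMeasurable (deriv f) (gaussianReal μ v) :=
    (measurable_deriv f).aestronglyMeasurable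
  have hlhs : ∫ ω, (Z ω - μ) * f (Z ω) ∂P = ∫ x, (x - μ) * f x ∂gaussianReal μ v :=
    hZ.integral_comp hm
  have hrhs : ∫ ω, deriv f (Z ω) ∂P = ∫ x, deriv f x ∂gaussianReal μ v := hZ.integral_comp hm'
  rw [hlhs, hrhs]
  exact integral_sub_mul_eq_mul_integral_deriv_gaussianReal hf
    ((hZ.integrable_comp_iff hm).1 hZf) ((hZ.integrable_comp_iff hm').1 hf') htop hbot

lemma HasLaw.integral_mul_self_of_gaussianReal {Z : Ω → ℝ} {v : ℝ≥0}
    (hZ : HasLaw Z (gaussianReal 0 v) P) :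
    ∫ ω, Z ω * Z ω ∂P = v := by
  have hmean : ∫ ω, Z ω ∂P = 0 := by rw [hZ.integral_eq, integral_id_gaussianReal]
  simp_rw [← sq, ← variance_of_integral_eq_zero hZ.aemeasurable hmean, hZ.variance_eq,
    variance_id_gaussianReal]

lemma integral_mul_const_mul_add_of_indepFun {X Z N : Ω → ℝ} (hXN : IndepFun X N P)
    (hX : Integrable X P) (hXZ : Integrable (fun ω => Z ω * X ω) P) (hN : Integrable N P)
    (hN0 : ∫ ω, N ω ∂P = 0) (a : ℝ) :
    ∫ ω, X ω * (a * Z ω + N ω) ∂P = a * ∫ ω, Z ω * X ω ∂P := by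
  have hXN0 : ∫ ω, X ω * N ω ∂P = 0 := by
    rw [← mul_zero (∫ ω, X ω ∂P), ← hN0]
    exact hXN.integral_mul_eq_mul_integral hX.aestronglyMeasurable hN.aestronglyMeasurable
  have hXN1 : Integrable (fun ω => X ω * N ω) P := hXN.integrable_mul hX hN
  simp_rw [mul_add, mul_left_comm (X _), mul_comm (X _) (Z _)]
  rw [integral_add (hXZ.const_mul a) hXN1, integral_const_mul, hXN0, add_zero]

end RandomVariables

end ProbabilityTheory

theorem bussgang_cross_correlation_general
    {Ω : Type*} [MeasureSpace Ω] [IsProbabilityMeasure (ℙ : Measure Ω)]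
    (σz : ℝ)
    (Z N : Ω → ℝ) (hZ : Measurable Z)
    (hindep : IndepFun Z N ℙ)
    (hZlaw : Measure.map Z ℙ = gaussianReal 0 ⟨σz ^ 2, sq_nonneg σz⟩)
    (hNint : Integrable N ℙ) (hNmean : ∫ ω, N ω ∂ℙ = 0)
    (a : ℝ) (W : Ω → ℝ) (hW : W = fun ω => a * Z ω + N ω)
    (f : ℝ → ℝ) (hf : Differentiable ℝ f)
    (hint1 : Integrable (fun ω => f (Z ω)) ℙ)
    (hint2 : Integrable (fun ω => Z ω * f (Z ω)) ℙ)
    (hint3 : Integrable (fun ω => deriv f (Z ω)) ℙ)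
    (htop : Tendsto (fun x => f x * Real.exp (-x ^ 2 / (2 * σz ^ 2))) atTop (nhds 0))
    (hbot : Tendsto (fun x => f x * Real.exp (-x ^ 2 / (2 * σz ^ 2))) atBot (nhds 0)) :
    ∫ ω, f (Z ω) * W ω ∂ℙ = (∫ ω, deriv f (Z ω) ∂ℙ) * ∫ ω, Z ω * W ω ∂ℙ := by
  set v : ℝ≥0 := ⟨σz ^ 2, sq_nonneg σz⟩
  have hv : (v : ℝ) = σz ^ 2 := rfl
  have hlaw : HasLaw Z (gaussianReal 0 v) ℙ := ⟨hZ.aemeasurable, hZlaw⟩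
  have hpdf (x : ℝ) : f x * gaussianPDFReal 0 v x =
      (√(2 * π * v))⁻¹ * (f x * Real.exp (-x ^ 2 / (2 * σz ^ 2))) := by
    rw [gaussianPDFReal, sub_zero, hv]
    ring
  have hstein := hlaw.integral_sub_mul_eq_mul_integral_deriv_of_gaussianReal hf
    (by simpa using hint2) hint3
    (by simpa [hpdf] using htop.const_mul _) (by simpa [hpdf] using hbot.const_mul _)
  simp only [sub_zero, hv] at hstein
  have hZ2 : MemLp Z 2 ℙ := (memLp_map_measure_iff aestronglyMeasurable_id hZ.aemeasurable).1
    (hZlaw ▸ memLp_id_gaussianReal 2)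
  have hfZN : IndepFun (fun ω => f (Z ω)) N ℙ := hindep.comp hf.continuous.measurable measurable_id
  simp only [hW]
  rw [integral_mul_const_mul_add_of_indepFun hfZN hint1 hint2 hNint hNmean,
    integral_mul_const_mul_add_of_indepFun hindep (hZ2.integrable one_le_two)
      (hZ2.integrable_mul hZ2) hNint hNmean, hstein, hlaw.integral_mul_self_of_gaussianReal, hv]
  ring

/-- Cross-correlation form of Bussgang's theorem: for `Z` centered Gaussian,
`N` independent of `Z` with zero mean, and `W = a•Z + N`,
`E[f(Z)·W] = E[f'(Z)] · E[Z·W]`. -/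
theorem bussgang_cross_correlation
    {Ω : Type*} [MeasureSpace Ω] [IsProbabilityMeasure (ℙ : Measure Ω)]
    (σz : ℝ) (hσz : 0 < σz ^ 2)
    (Z N : Ω → ℝ) (hZ : Measurable Z) (hN : Measurable N)
    (hindep : IndepFun Z N ℙ)
    (hZlaw : Measure.map Z ℙ = gaussianReal 0 ⟨σz ^ 2, sq_nonneg σz⟩)
    (hNint : Integrable N ℙ) (hNmean : ∫ ω, N ω ∂ℙ = 0)
    (a : ℝ) (W : Ω → ℝ) (hW : W = fun ω => a * Z ω + N ω)
    (f : ℝ → ℝ) (hf : Differentiable ℝ f)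
    (hint1 : Integrable (fun ω => f (Z ω)) ℙ)
    (hint2 : Integrable (fun ω => Z ω * f (Z ω)) ℙ)
    (hint3 : Integrable (fun ω => deriv f (Z ω)) ℙ)
    (htop : Tendsto (fun x => f x * Real.exp (-x ^ 2 / (2 * σz ^ 2))) atTop (nhds 0))
    (hbot : Tendsto (fun x => f x * Real.exp (-x ^ 2 / (2 * σz ^ 2))) atBot (nhds 0)) :
    ∫ ω, f (Z ω) * W ω ∂ℙ = (∫ ω, deriv f (Z ω) ∂ℙ) * ∫ ω, Z ω * W ω ∂ℙ :=
  bussgang_cross_correlation_general σz Z N hZ hindep hZlaw hNint hNmean a W hW f hf hint1 hint2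
    hint3 htop hbot
end

section
/- Let a > 0, let U and U' be independent random variables uniformly distributed on the interval [−a, a], let V be an independent Gaussian random variable with mean 0 and variance σ_v², and write σ_u² = a²/3 for the variance of U. Fix θ ∈ ℝ and set Y = (θU + U' + V)³. Then E[Y·U] = σ_u²·((9/5)σ_u²θ³ + 3(σ_u² + σ_v²)θ) and E[Y·U'] = σ_u²·(3σ_u²θ² + (9/5)σ_u² + 3σ_v²). -/
/-!
Independence factorises every moment. Writing `S = θU + U'`, the binomial expansion of
`(S + V)³ · U` and the independence of `(S, U)` from `V` give
`E[(S + V)³ U] = ∑ₖ C(3,k) E[Sᵏ U] E[V³⁻ᵏ]`, and each `E[Sᵏ U]` expands in the same way over the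
independent pair `(θU, U')`. Only the uniform moments `E[U²] = a²/3`, `E[U⁴] = a⁴/5 = (9/5)σ_u⁴`
and the Gaussian moments `E[V] = E[V³] = 0`, `E[V²] = σ_v²` survive.
-/

open MeasureTheory ProbabilityTheory Finset Set

lemma add_pow_mul_eq_sum (x z w : ℝ) (n : ℕ) :
    (x + w) ^ n * z = ∑ k ∈ range (n + 1), x ^ k * z * w ^ (n - k) * n.choose k := by
  rw [add_pow, sum_mul]
  exact sum_congr rfl fun k _ => by ring

namespace ProbabilityTheory

section Independence

variable {Ω : Type*} {mΩ : MeasurableSpace Ω} {μ : Measure Ω}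

section Binomial

variable {S Z W : Ω → ℝ}

lemma IndepFun.pow_mul_pow (hind : IndepFun (fun ω => (S ω, Z ω)) W μ) (k m : ℕ) :
    IndepFun (fun ω => S ω ^ k * Z ω) (fun ω => W ω ^ m) μ :=
  hind.comp (φ := fun p : ℝ × ℝ => p.1 ^ k * p.2) (ψ := fun w => w ^ m)
    (by fun_prop) (by fun_prop)

lemma IndepFun.integrable_add_pow_mul_term (hind : IndepFun (fun ω => (S ω, Z ω)) W μ)
    {n : ℕ} (hSZ : ∀ k ≤ n, Integrable (fun ω => S ω ^ k * Z ω) μ)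
    (hW : ∀ k ≤ n, Integrable (fun ω => W ω ^ k) μ) {k : ℕ} (hk : k ∈ range (n + 1)) :
    Integrable (fun ω => S ω ^ k * Z ω * W ω ^ (n - k) * n.choose k) μ := by
  have hkn : k ≤ n := Nat.lt_succ_iff.mp (mem_range.mp hk)
  exact ((hind.pow_mul_pow k (n - k)).integrable_mul (hSZ k hkn)
    (hW _ (Nat.sub_le n k))).mul_const _

lemma IndepFun.integrable_add_pow_mul (hind : IndepFun (fun ω => (S ω, Z ω)) W μ) {n : ℕ}
    (hSZ : ∀ k ≤ n, Integrable (fun ω => S ω ^ k * Z ω) μ)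
    (hW : ∀ k ≤ n, Integrable (fun ω => W ω ^ k) μ) :
    Integrable (fun ω => (S ω + W ω) ^ n * Z ω) μ := by
  simp_rw [add_pow_mul_eq_sum]
  exact integrable_finsetSum _ fun k hk => hind.integrable_add_pow_mul_term hSZ hW hk

lemma IndepFun.integral_add_pow_mul (hind : IndepFun (fun ω => (S ω, Z ω)) W μ) {n : ℕ}
    (hSZ : ∀ k ≤ n, Integrable (fun ω => S ω ^ k * Z ω) μ)
    (hW : ∀ k ≤ n, Integrable (fun ω => W ω ^ k) μ) :
    ∫ ω, (S ω + W ω) ^ n * Z ω ∂μ =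
      ∑ k ∈ range (n + 1), (∫ ω, S ω ^ k * Z ω ∂μ) * (∫ ω, W ω ^ (n - k) ∂μ) * n.choose k := by
  simp_rw [add_pow_mul_eq_sum]
  rw [integral_finsetSum _ fun k hk => hind.integrable_add_pow_mul_term hSZ hW hk]
  refine sum_congr rfl fun k hk => ?_
  have hkn : k ≤ n := Nat.lt_succ_iff.mp (mem_range.mp hk)
  rw [integral_mul_const, (hind.pow_mul_pow k (n - k)).integral_fun_mul_eq_mul_integral
    (hSZ k hkn).aestronglyMeasurable (hW _ (Nat.sub_le n k)).aestronglyMeasurable]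

end Binomial

variable {X X' : Ω → ℝ}

lemma IndepFun.integrable_and_integral_mul_add_pow_mul_left (h : IndepFun X X' μ)
    (hX : ∀ k, Integrable (fun ω => X ω ^ k) μ) (hX' : ∀ k, Integrable (fun ω => X' ω ^ k) μ)
    (c : ℝ) (n : ℕ) :
    Integrable (fun ω => (c * X ω + X' ω) ^ n * X ω) μ ∧
      ∫ ω, (c * X ω + X' ω) ^ n * X ω ∂μ = ∑ k ∈ range (n + 1),
        c ^ k * (∫ ω, X ω ^ (k + 1) ∂μ) * (∫ ω, X' ω ^ (n - k) ∂μ) * n.choose k := by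
  have hind : IndepFun (fun ω => (c * X ω, X ω)) X' μ :=
    h.comp (φ := fun x => (c * x, x)) (by fun_prop) measurable_id
  have hpow : ∀ k, (fun ω => (c * X ω) ^ k * X ω) = fun ω => c ^ k * X ω ^ (k + 1) :=
    fun k => funext fun ω => by ring
  have hSZ : ∀ k ≤ n, Integrable (fun ω => (c * X ω) ^ k * X ω) μ :=
    fun k _ => hpow k ▸ (hX (k + 1)).const_mul _
  refine ⟨hind.integrable_add_pow_mul hSZ fun k _ => hX' k, ?_⟩
  rw [hind.integral_add_pow_mul hSZ fun k _ => hX' k]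
  simp_rw [hpow, integral_const_mul]

lemma IndepFun.integrable_and_integral_mul_add_pow_mul_right (h : IndepFun X X' μ)
    (hX : ∀ k, Integrable (fun ω => X ω ^ k) μ) (hX' : ∀ k, Integrable (fun ω => X' ω ^ k) μ)
    (c : ℝ) (n : ℕ) :
    Integrable (fun ω => (c * X ω + X' ω) ^ n * X' ω) μ ∧
      ∫ ω, (c * X ω + X' ω) ^ n * X' ω ∂μ = ∑ k ∈ range (n + 1),
        (∫ ω, X' ω ^ (k + 1) ∂μ) * c ^ (n - k) * (∫ ω, X ω ^ (n - k) ∂μ) * n.choose k := by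
  have hind : IndepFun (fun ω => (X' ω, X' ω)) (fun ω => c * X ω) μ :=
    h.symm.comp (φ := fun x => (x, x)) (ψ := fun x => c * x) (by fun_prop) (by fun_prop)
  have hSZ : ∀ k ≤ n, Integrable (fun ω => X' ω ^ k * X' ω) μ :=
    fun k _ => by simpa only [← pow_succ] using hX' (k + 1)
  have hW : ∀ k ≤ n, Integrable (fun ω => (c * X ω) ^ k) μ :=
    fun k _ => by simpa only [mul_pow] using (hX k).const_mul (c ^ k)
  simp_rw [add_comm (c * X _)]
  refine ⟨hind.integrable_add_pow_mul hSZ hW, ?_⟩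
  rw [hind.integral_add_pow_mul hSZ hW]
  simp_rw [← pow_succ, mul_pow, integral_const_mul, mul_assoc]

end Independence

section Laws

variable {Ω : Type*} {mΩ : MeasurableSpace Ω} {μ : Measure Ω}

lemma HasLaw.integrable_comp {𝓧 : Type*} {m𝓧 : MeasurableSpace 𝓧} {ν : Measure 𝓧}
    {X : Ω → 𝓧} {f : 𝓧 → ℝ} (hX : HasLaw X ν μ) (hf : Integrable f ν) :
    Integrable (f ∘ X) μ := by
  rw [← hX.map_eq] at hf
  exact hf.comp_aemeasurable hX.aemeasurable

lemma HasLaw.integral_pow {ν : Measure ℝ} {X : Ω → ℝ} (hX : HasLaw X ν μ) (n : ℕ) :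
    ∫ ω, X ω ^ n ∂μ = ∫ x, x ^ n ∂ν :=
  hX.integral_comp (f := fun x => x ^ n) (by fun_prop)

end Laws

end ProbabilityTheory

lemma integral_pow_cond_Icc {l u : ℝ} (h : l < u) (n : ℕ) :
    ∫ x, x ^ n ∂(volume[|Icc l u]) = (u ^ (n + 1) - l ^ (n + 1)) / ((n + 1) * (u - l)) := by
  rw [ProbabilityTheory.cond, integral_smul_measure, Real.volume_Icc, integral_Icc_eq_integral_Ioc,
    ← intervalIntegral.integral_of_le h.le, integral_pow, ENNReal.toReal_inv,
    ENNReal.toReal_ofReal (by linarith), smul_eq_mul]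
  field_simp

lemma integrable_pow_cond_Icc {l u : ℝ} (h : l < u) (n : ℕ) :
    Integrable (fun x : ℝ => x ^ n) (volume[|Icc l u]) :=
  Integrable.smul_measure (μ := volume.restrict (Icc l u)) (continuous_pow n).integrableOn_Icc <| by
    simp [Real.volume_Icc, h]

lemma integral_pow_eq_zero_of_map_neg_eq {ν : Measure ℝ} (hν : ν.map (fun x => -x) = ν) {n : ℕ}
    (hn : Odd n) : ∫ x, x ^ n ∂ν = 0 := by
  have h : ∫ x, x ^ n ∂ν = -∫ x, x ^ n ∂ν := by
    conv_lhs => rw [← hν]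
    rw [integral_map (by fun_prop) (by fun_prop), ← integral_neg]
    simp [hn.neg_pow]
  linarith

lemma integrable_pow_gaussianReal (m : ℝ) (v : NNReal) (n : ℕ) :
    Integrable (fun x : ℝ => x ^ n) (gaussianReal m v) := by
  refine (integrable_norm_iff (by fun_prop)).mp ?_
  simpa [abs_pow] using (memLp_id_gaussianReal (μ := m) (v := v) n).integrable_norm_pow'

lemma integral_pow_gaussianReal_zero_of_odd (v : NNReal) {n : ℕ} (hn : Odd n) :
    ∫ x, x ^ n ∂gaussianReal 0 v = 0 :=
  integral_pow_eq_zero_of_map_neg_eq (by rw [gaussianReal_map_neg, neg_zero]) hn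

lemma integral_sq_gaussianReal_zero (v : NNReal) : ∫ x, x ^ 2 ∂gaussianReal 0 v = v := by
  simpa using (variance_of_integral_eq_zero aemeasurable_id integral_id_gaussianReal).symm.trans
    (variance_id_gaussianReal (μ := 0) (v := v))

/-- Cross-correlations of the cubic stochastic Wiener system with uniform input on
`[-a, a]` (so the input variance is `σ_u² = a²/3`): for `Y = (θU + U' + V)³`,
`E[Y·U] = σ_u²((9/5)σ_u²θ³ + 3(σ_u² + σ_v²)θ)` and
`E[Y·U'] = σ_u²(3σ_u²θ² + (9/5)σ_u² + 3σ_v²)`. -/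
theorem bla_cross_correlations_uniform_input
    {Ω : Type*} [MeasureSpace Ω] [IsProbabilityMeasure (ℙ : Measure Ω)]
    (a : ℝ) (ha : 0 < a) (σv : ℝ)
    (U U' V : Ω → ℝ)
    (hU : Measurable U) (hU' : Measurable U') (hV : Measurable V)
    (hindep : iIndepFun ![U, U', V] ℙ)
    (hUlaw : Measure.map U ℙ =
      (volume (Set.Icc (-a) a))⁻¹ • volume.restrict (Set.Icc (-a) a))
    (hU'law : Measure.map U' ℙ =
      (volume (Set.Icc (-a) a))⁻¹ • volume.restrict (Set.Icc (-a) a))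
    (hVlaw : Measure.map V ℙ = gaussianReal 0 ⟨σv ^ 2, sq_nonneg σv⟩)
    (σu2 : ℝ) (hσu2 : σu2 = a ^ 2 / 3)
    (θ : ℝ) (Y : Ω → ℝ) (hY : Y = fun ω => (θ * U ω + U' ω + V ω) ^ 3) :
    (∫ ω, Y ω * U ω ∂ℙ = σu2 * ((9 / 5) * σu2 * θ ^ 3 + 3 * (σu2 + σv ^ 2) * θ)) ∧
    (∫ ω, Y ω * U' ω ∂ℙ = σu2 * (3 * σu2 * θ ^ 2 + (9 / 5) * σu2 + 3 * σv ^ 2)) := by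
  have hUU' : IndepFun U U' ℙ := hindep.indepFun (i := 0) (j := 1) (by decide)
  have hpairV : IndepFun (fun ω => (U ω, U' ω)) V ℙ :=
    hindep.indepFun_prodMk (fun i => by fin_cases i <;> assumption) 0 1 2 (by decide) (by decide)
  -- `volume[|Icc (-a) a]` unfolds to the uniform law written out in `hUlaw`.
  have hlawU : HasLaw U (volume[|Icc (-a) a]) ℙ := ⟨hU.aemeasurable, hUlaw⟩
  have hlawU' : HasLaw U' (volume[|Icc (-a) a]) ℙ := ⟨hU'.aemeasurable, hU'law⟩
  have hlawV : HasLaw V _ ℙ := ⟨hV.aemeasurable, hVlaw⟩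
  have hIcc : -a < a := by linarith
  have hUint k := hlawU.integrable_comp (integrable_pow_cond_Icc hIcc k)
  have hU'int k := hlawU'.integrable_comp (integrable_pow_cond_Icc hIcc k)
  have hVint k := hlawV.integrable_comp (integrable_pow_gaussianReal _ _ k)
  have hmU k := (hlawU.integral_pow k).trans (integral_pow_cond_Icc hIcc k)
  have hmU' k := (hlawU'.integral_pow k).trans (integral_pow_cond_Icc hIcc k)
  have hV1 := (hlawV.integral_pow 1).trans (integral_pow_gaussianReal_zero_of_odd _ odd_one)
  have hV2 : ∫ ω, V ω ^ 2 = σv ^ 2 := (hlawV.integral_pow 2).trans (integral_sq_gaussianReal_zero _)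
  have hV3 := (hlawV.integral_pow 3).trans (integral_pow_gaussianReal_zero_of_odd _ (by decide))
  subst hY hσu2
  constructor
  · have hind : IndepFun (fun ω => (θ * U ω + U' ω, U ω)) V ℙ :=
      hpairV.comp (φ := fun p : ℝ × ℝ => (θ * p.1 + p.2, p.1)) (by fun_prop) measurable_id
    have hUU'mom := hUU'.integrable_and_integral_mul_add_pow_mul_left hUint hU'int θ
    rw [hind.integral_add_pow_mul (fun k _ => (hUU'mom k).1) fun k _ => hVint k]
    simp only [sum_range_succ, sum_range_zero, (hUU'mom _).2, hmU, hmU', hV1, hV2, hV3]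
    norm_num [Nat.choose]
    field_simp
    ring
  · have hind : IndepFun (fun ω => (θ * U ω + U' ω, U' ω)) V ℙ :=
      hpairV.comp (φ := fun p : ℝ × ℝ => (θ * p.1 + p.2, p.2)) (by fun_prop) measurable_id
    have hUU'mom := hUU'.integrable_and_integral_mul_add_pow_mul_right hUint hU'int θ
    rw [hind.integral_add_pow_mul (fun k _ => (hUU'mom k).1) fun k _ => hVint k]
    simp only [sum_range_succ, sum_range_zero, (hUU'mom _).2, hmU, hmU', hV1, hV2, hV3]
    norm_num [Nat.choose]
    field_simp
    ring
end

section
/- Let m, n be positive natural numbers with n ≤ m, let G be a real m×n matrix of full column rank, and let P and W̃ be symmetric positive definite real m×m matrices. Then (GᵀW̃G)⁻¹ GᵀW̃ P W̃G (GᵀW̃G)⁻¹ − (Gᵀ P⁻¹ G)⁻¹ is positive semidefinite; that is, the choice W̃ = P⁻¹ minimizes, in the positive semidefinite (Loewner) order, the matrix (GᵀW̃G)⁻¹ GᵀW̃ P W̃G (GᵀW̃G)⁻¹ over all symmetric positive definite weighting matrices W̃. -/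
/-!
Write `A = GᵀWG`, `B = GᵀP⁻¹G`, and let `L = A⁻¹GᵀW`, `L₀ = B⁻¹GᵀP⁻¹` be the linear maps of the
two weighted least-squares fits, so the covariances are `LPLᵀ` and `L₀PL₀ᵀ = B⁻¹`.
Both are left inverses of `G`, and `PL₀ᵀ = GB⁻¹`; hence `LPL₀ᵀ = LGB⁻¹ = B⁻¹` and the cross terms of
`(L - L₀)P(L - L₀)ᵀ` collapse, leaving `LPLᵀ - B⁻¹`, which is positive semidefinite (Gauss–Markov).
-/

open Matrix

namespace Matrix

variable {m n R : Type*}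

theorem mulVec_injective_of_rank_eq_card [Fintype n] [CommRing R] [Nontrivial R] [OrzechProperty R]
    {G : Matrix m n R} (hG : G.rank = Fintype.card n) : Function.Injective G.mulVec := by
  rwa [mulVec_injective_iff, linearIndependent_iff_card_eq_finrank_span, Set.finrank,
    ← rank_eq_finrank_span_cols, eq_comm]

variable [CommRing R] [Fintype m]

theorem sub_mul_mul_transpose_sub_eq {L L₀ : Matrix n m R} {P : Matrix m m R} {C : Matrix n n R}
    (hPt : Pᵀ = P) (hCt : Cᵀ = C) (hcross : L * P * L₀ᵀ = C) (hself : L₀ * P * L₀ᵀ = C) :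
    (L - L₀) * P * (L - L₀)ᵀ = L * P * Lᵀ - C := by
  have hcross' : L₀ * P * Lᵀ = C := by
    rw [← hCt, ← hcross, transpose_mul, transpose_mul, transpose_transpose, hPt, Matrix.mul_assoc]
  simp only [transpose_sub, Matrix.sub_mul, Matrix.mul_sub, hcross, hcross', hself]
  abel

variable [Fintype n] [DecidableEq n]

/-- The linear map `β̂ ↦ θ̂` of the least-squares fit of `β̂ ≈ Gθ` with weight `W`. -/
noncomputable def weightedLeftInverse (G : Matrix m n R) (W : Matrix m m R) : Matrix n m R :=
  (Gᵀ * W * G)⁻¹ * Gᵀ * W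

theorem weightedLeftInverse_mul_self {G : Matrix m n R} {W : Matrix m m R}
    (h : IsUnit (Gᵀ * W * G).det) : weightedLeftInverse G W * G = 1 := by
  rw [weightedLeftInverse, Matrix.mul_assoc, Matrix.mul_assoc, ← Matrix.mul_assoc Gᵀ,
    nonsing_inv_mul _ h]

theorem transpose_weightedLeftInverse {G : Matrix m n R} {W : Matrix m m R} (hWt : Wᵀ = W) :
    (weightedLeftInverse G W)ᵀ = W * G * (Gᵀ * W * G)⁻¹ := by
  simp only [weightedLeftInverse, transpose_mul, transpose_nonsing_inv, transpose_transpose, hWt,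
    Matrix.mul_assoc]

theorem weightedLeftInverse_mul_mul_transpose {G : Matrix m n R} {P W : Matrix m m R}
    (hWt : Wᵀ = W) :
    weightedLeftInverse G W * P * (weightedLeftInverse G W)ᵀ =
      (Gᵀ * W * G)⁻¹ * Gᵀ * W * P * W * G * (Gᵀ * W * G)⁻¹ := by
  rw [transpose_weightedLeftInverse hWt, weightedLeftInverse]
  simp only [Matrix.mul_assoc]

variable [DecidableEq m]

theorem mul_mul_transpose_weightedLeftInverse_inv {G : Matrix m n R} {P : Matrix m m R}
    (hP : IsUnit P.det) (hPt : Pᵀ = P) {L : Matrix n m R} (hL : L * G = 1) :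
    L * P * (weightedLeftInverse G P⁻¹)ᵀ = (Gᵀ * P⁻¹ * G)⁻¹ := by
  rw [transpose_weightedLeftInverse (by rw [transpose_nonsing_inv, hPt]), Matrix.mul_assoc L,
    ← Matrix.mul_assoc P, ← Matrix.mul_assoc P, mul_nonsing_inv _ hP, Matrix.one_mul,
    ← Matrix.mul_assoc, hL, Matrix.one_mul]

end Matrix

theorem optimal_weighting_indirect_inference_general (m n : ℕ)
    (G : Matrix (Fin m) (Fin n) ℝ) (hG : G.rank = n)
    (P W : Matrix (Fin m) (Fin m) ℝ) (hP : P.PosDef) (hW : W.PosDef) :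
    ((Gᵀ * W * G)⁻¹ * Gᵀ * W * P * W * G * (Gᵀ * W * G)⁻¹ -
      (Gᵀ * P⁻¹ * G)⁻¹).PosSemidef := by
  have hGinj : Function.Injective G.mulVec :=
    mulVec_injective_of_rank_eq_card (by rw [hG, Fintype.card_fin])
  have hPt : Pᵀ = P := hP.1
  have hWt : Wᵀ = W := hW.1
  have hPdet : IsUnit P.det := (isUnit_iff_isUnit_det _).1 hP.isUnit
  have hA : (Gᵀ * W * G).PosDef := hW.conjTranspose_mul_mul_same hGinj
  have hB : (Gᵀ * P⁻¹ * G).PosDef := hP.inv.conjTranspose_mul_mul_same hGinj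
  have hBinvt : (Gᵀ * P⁻¹ * G)⁻¹ᵀ = (Gᵀ * P⁻¹ * G)⁻¹ := hB.1.inv
  have hL := weightedLeftInverse_mul_self ((isUnit_iff_isUnit_det _).1 hA.isUnit)
  have hL₀ := weightedLeftInverse_mul_self ((isUnit_iff_isUnit_det _).1 hB.isUnit)
  rw [← weightedLeftInverse_mul_mul_transpose hWt, ← sub_mul_mul_transpose_sub_eq hPt hBinvt
    (mul_mul_transpose_weightedLeftInverse_inv hPdet hPt hL)
    (mul_mul_transpose_weightedLeftInverse_inv hPdet hPt hL₀)]
  exact hP.posSemidef.mul_mul_conjTranspose_same _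

/-- Optimality of the weighting matrix in indirect inference: for `G` of full column
rank and `P`, `W̃` symmetric positive definite,
`(GᵀW̃G)⁻¹GᵀW̃PW̃G(GᵀW̃G)⁻¹ − (GᵀP⁻¹G)⁻¹` is positive semidefinite, i.e. the choice
`W̃ = P⁻¹` minimizes the asymptotic covariance in the Loewner order. -/
theorem optimal_weighting_indirect_inference (m n : ℕ) (hm : 0 < m) (hn : 0 < n)
    (hnm : n ≤ m) (G : Matrix (Fin m) (Fin n) ℝ) (hG : G.rank = n)
    (P W : Matrix (Fin m) (Fin m) ℝ) (hP : P.PosDef) (hW : W.PosDef) :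
    ((Gᵀ * W * G)⁻¹ * Gᵀ * W * P * W * G * (Gᵀ * W * G)⁻¹ -
      (Gᵀ * P⁻¹ * G)⁻¹).PosSemidef :=
  optimal_weighting_indirect_inference_general m n G hG P W hP hW
end
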